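/- arXiv:1206.1789 — 6 statements merged into one kernel-verified Lean document; each statement's English description precedes it below -/
import Mathlib

section
/- Let ε_0 = 1/2 and ε_k = 1 for k ≥ 1. For all n ∈ ℕ and 0 ≤ x, y ≤ π with cos x ≠ cos y, ∑_{k=0}^{n} ε_k cos(ky) sin((n-k+1/2)x) = sin(x/2)·(cos(x/2)cos((n+1/2)x) - cos(y/2)cos((n+1/2)y))/(cos x - cos y). -/
open Real Finset

/-! Multiplied by `2 (cos x - cos y)`, the sum telescopes: by the product formulas
`2 cos x sin u = sin (u + x) + sin (u - x)` and `2 cos y cos v = cos (v + y) + cos (v - y)`,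
the `k`-th term (`k ≥ 1`) becomes `T k - T (k + 1)`, where
`T k = cos (k y) sin ((n - k + 3/2) x) - cos ((k - 1) y) sin ((n - k + 1/2) x)`.
Only `T 1`, `T (n + 1)` and the halved `k = 0` term survive, and the double-angle and
sum-to-product formulas turn them into the closed form. -/

theorem two_mul_cos_sub_cos_mul_cos_mul_sin (x y u v : ℝ) :
    2 * (cos x - cos y) * (cos v * sin u) =
      (cos v * sin (u + x) - cos (v - y) * sin u) -
        (cos (v + y) * sin u - cos v * sin (u - x)) := by
  simp only [sin_add, sin_sub, cos_add, cos_sub]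
  ring

theorem two_mul_cos_sub_cos_mul_sum_eps_cos_sin (n : ℕ) (x y : ℝ) :
    2 * (cos x - cos y) * ∑ k ∈ range (n + 1),
        (if k = 0 then (1 / 2 : ℝ) else 1) * cos (k * y) * sin ((n - k + 1 / 2) * x) =
      sin x * cos ((n + 1 / 2) * x) - sin (x / 2) * (cos ((n + 1) * y) + cos (n * y)) := by
  set T : ℕ → ℝ := fun k ↦
    cos (k * y) * sin ((n - k + 3 / 2) * x) - cos ((k - 1) * y) * sin ((n - k + 1 / 2) * x)
  have hterm (k : ℕ) : 2 * (cos x - cos y) * (cos ((k + 1 : ℕ) * y) *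
      sin ((n - (k + 1 : ℕ) + 1 / 2) * x)) = T (k + 1) - T (k + 2) := by
    rw [two_mul_cos_sub_cos_mul_cos_mul_sin]
    simp only [T]
    push_cast
    ring_nf
  rw [sum_range_succ', mul_add, mul_sum]
  simp only [Nat.succ_ne_zero, if_false, one_mul, if_true]
  rw [sum_congr rfl fun k _ ↦ hterm k, sum_range_sub' (fun k ↦ T (k + 1))]
  simp only [T]
  push_cast
  rw [show ((n : ℝ) - 1 + 3 / 2) * x = (n + 1 / 2) * x by ring,
    show ((n : ℝ) - 1 + 1 / 2) * x = (n + 1 / 2) * x - x by ring,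
    show ((n : ℝ) - (n + 1) + 3 / 2) * x = x / 2 by ring,
    show ((n : ℝ) - (n + 1) + 1 / 2) * x = -(x / 2) by ring,
    show ((n : ℝ) + 1 - 1) * y = n * y by ring, sin_sub, sin_neg]
  simp only [one_mul, sub_self, zero_mul, cos_zero, sub_zero]
  ring

theorem sum_eps_cos_sin_general (n : ℕ) (x y : ℝ) (h : Real.cos x ≠ Real.cos y) :
    ∑ k ∈ Finset.range (n + 1),
        (if k = 0 then (1 / 2 : ℝ) else 1) * Real.cos ((k : ℝ) * y) *
          Real.sin (((n : ℝ) - (k : ℝ) + 1 / 2) * x) =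
      Real.sin (x / 2) *
        (Real.cos (x / 2) * Real.cos (((n : ℝ) + 1 / 2) * x) -
          Real.cos (y / 2) * Real.cos (((n : ℝ) + 1 / 2) * y)) /
        (Real.cos x - Real.cos y) := by
  have hsin : sin x = 2 * sin (x / 2) * cos (x / 2) := by
    rw [← sin_two_mul, mul_div_cancel₀ x two_ne_zero]
  have hcos : cos ((n + 1) * y) + cos (n * y) = 2 * cos ((n + 1 / 2) * y) * cos (y / 2) := by
    rw [cos_add_cos]
    ring_nf
  rw [eq_div_iff (sub_ne_zero.mpr h)]
  linear_combination (two_mul_cos_sub_cos_mul_sum_eps_cos_sin n x y + cos ((n + 1 / 2) * x) * hsin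
    - sin (x / 2) * hcos) / 2

/-- With `ε₀ = 1/2` and `ε_k = 1` for `k ≥ 1`: for all `n ∈ ℕ` and `0 ≤ x, y ≤ π` with
`cos x ≠ cos y`,
`∑_{k=0}^{n} ε_k cos (ky) sin ((n-k+1/2)x)
  = sin (x/2) (cos (x/2) cos ((n+1/2)x) - cos (y/2) cos ((n+1/2)y)) / (cos x - cos y)`. -/
theorem sum_eps_cos_sin (n : ℕ) (x y : ℝ) (hx0 : 0 ≤ x) (hxπ : x ≤ π) (hy0 : 0 ≤ y)
    (hyπ : y ≤ π) (h : Real.cos x ≠ Real.cos y) :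
    ∑ k ∈ Finset.range (n + 1),
        (if k = 0 then (1 / 2 : ℝ) else 1) * Real.cos ((k : ℝ) * y) *
          Real.sin (((n : ℝ) - (k : ℝ) + 1 / 2) * x) =
      Real.sin (x / 2) *
        (Real.cos (x / 2) * Real.cos (((n : ℝ) + 1 / 2) * x) -
          Real.cos (y / 2) * Real.cos (((n : ℝ) + 1 / 2) * y)) /
        (Real.cos x - Real.cos y) :=
  sum_eps_cos_sin_general n x y h
end

section
/- Let ε_0 = 1/2 and ε_k = 1 for k ≥ 1. For all n ∈ ℕ and 0 ≤ x, y ≤ π with cos x ≠ cos y, ∑_{k=0}^{n} ε_k cos(ky) cos((n-k+1/2)x) = cos(x/2)·(sin(y/2)sin((n+1/2)y) - sin(x/2)sin((n+1/2)x))/(cos x - cos y). -/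
/-!
Multiplying `cos (k y) cos ((a - k) x)` by `2 (cos x - cos y)` and expanding both products with
the product-to-sum formulas gives a difference `G k - G (k + 1)` of consecutive values of
`G = cosCosAntidiff a x y`, so the sum telescopes. For `a = n + 1/2` the boundary value
`G (n + 1)` has the factor `cos (x/2) = cos (-x/2)`, and halving the `k = 0` term turns `G 0`
into `-sin x sin (a x)`, where `sin x = 2 sin (x/2) cos (x/2)` supplies the same factor.
-/

open Real Finset

noncomputable def cosCosAntidiff (a x y t : ℝ) : ℝ :=
  cos (t * y) * cos ((a - t + 1) * x) - cos ((t - 1) * y) * cos ((a - t) * x)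

theorem two_mul_cos_mul_cos_mul_sub_eq_cosCosAntidiff_sub (a x y t : ℝ) :
    2 * (cos x - cos y) * (cos (t * y) * cos ((a - t) * x)) =
      cosCosAntidiff a x y t - cosCosAntidiff a x y (t + 1) := by
  have hx₀ : (a - (t + 1) + 1) * x = (a - t) * x := by ring
  have hx₁ : (a - t + 1) * x = (a - t) * x + x := by ring
  have hx₂ : (a - (t + 1)) * x = (a - t) * x - x := by ring
  have hy₁ : (t + 1) * y = t * y + y := by ring
  have hy₂ : (t - 1) * y = t * y - y := by ring
  rw [cosCosAntidiff, cosCosAntidiff, add_sub_cancel_right, hx₀, hx₁, hx₂, hy₁, hy₂,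
    cos_add, cos_sub, cos_add, cos_sub]
  ring

theorem two_mul_sub_mul_sum_range_cos_mul_cos (a x y : ℝ) (m : ℕ) :
    2 * (cos x - cos y) * ∑ k ∈ range m, cos ((k : ℝ) * y) * cos ((a - k) * x) =
      cosCosAntidiff a x y 0 - cosCosAntidiff a x y m := by
  have h_sum := sum_range_sub' (fun k : ℕ ↦ cosCosAntidiff a x y k) m
  rw [Nat.cast_zero] at h_sum
  rw [mul_sum, ← h_sum]
  refine sum_congr rfl fun k _ ↦ ?_
  push_cast
  exact two_mul_cos_mul_cos_mul_sub_eq_cosCosAntidiff_sub a x y k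

theorem cosCosAntidiff_zero (a x y : ℝ) :
    cosCosAntidiff a x y 0 = cos (a * x) * cos x - sin (a * x) * sin x - cos y * cos (a * x) := by
  rw [cosCosAntidiff, sub_zero, add_mul, one_mul, cos_add, zero_mul, zero_sub, neg_mul, one_mul,
    cos_neg, cos_zero, one_mul]

theorem cosCosAntidiff_succ_of_add_half (n : ℕ) (x y : ℝ) :
    cosCosAntidiff (n + 1 / 2) x y (n + 1) =
      -2 * cos (x / 2) * sin (y / 2) * sin ((n + 1 / 2) * y) := by
  have hx₁ : ((n : ℝ) + 1 / 2 - (n + 1) + 1) * x = x / 2 := by ring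
  have hx₂ : ((n : ℝ) + 1 / 2 - (n + 1)) * x = -(x / 2) := by ring
  have hy₁ : ((n : ℝ) + 1) * y = (n + 1 / 2) * y + y / 2 := by ring
  have hy₂ : ((n : ℝ) + 1 - 1) * y = (n + 1 / 2) * y - y / 2 := by ring
  rw [cosCosAntidiff, hx₁, hx₂, hy₁, hy₂, cos_neg, cos_add, cos_sub]
  ring

theorem sum_eps_cos_cos_general (n : ℕ) (x y : ℝ) (h : Real.cos x ≠ Real.cos y) :
    ∑ k ∈ Finset.range (n + 1),
        (if k = 0 then (1 / 2 : ℝ) else 1) * Real.cos ((k : ℝ) * y) *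
          Real.cos (((n : ℝ) - (k : ℝ) + 1 / 2) * x) =
      Real.cos (x / 2) *
        (Real.sin (y / 2) * Real.sin (((n : ℝ) + 1 / 2) * y) -
          Real.sin (x / 2) * Real.sin (((n : ℝ) + 1 / 2) * x)) /
        (Real.cos x - Real.cos y) := by
  set a : ℝ := n + 1 / 2
  have h_weight : ∑ k ∈ range (n + 1), (if k = 0 then (1 / 2 : ℝ) else 1) *
        cos ((k : ℝ) * y) * cos ((n - k + 1 / 2) * x) =
      ∑ k ∈ range (n + 1), cos ((k : ℝ) * y) * cos ((a - k) * x) - cos (a * x) / 2 := by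
    have h_phase (k : ℕ) : (n : ℝ) - k + 1 / 2 = a - k := sub_add_eq_add_sub ..
    simp only [h_phase, sum_range_succ' _ n, Nat.succ_ne_zero, if_false, if_true, one_mul,
      mul_assoc, Nat.cast_zero, zero_mul, cos_zero, sub_zero]
    linarith
  have h_telescope := two_mul_sub_mul_sum_range_cos_mul_cos a x y (n + 1)
  rw [cosCosAntidiff_zero, Nat.cast_succ, cosCosAntidiff_succ_of_add_half] at h_telescope
  have h_sin : sin x = 2 * sin (x / 2) * cos (x / 2) := by
    rw [← sin_two_mul, mul_div_cancel₀ x two_ne_zero]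
  rw [h_weight, eq_div_iff (sub_ne_zero.2 h)]
  linear_combination h_telescope / 2 - sin (a * x) * h_sin / 2

/-- With `ε₀ = 1/2` and `ε_k = 1` for `k ≥ 1`: for all `n ∈ ℕ` and `0 ≤ x, y ≤ π` with
`cos x ≠ cos y`,
`∑_{k=0}^{n} ε_k cos (ky) cos ((n-k+1/2)x)
  = cos (x/2) (sin (y/2) sin ((n+1/2)y) - sin (x/2) sin ((n+1/2)x)) / (cos x - cos y)`. -/
theorem sum_eps_cos_cos (n : ℕ) (x y : ℝ) (hx0 : 0 ≤ x) (hxπ : x ≤ π) (hy0 : 0 ≤ y)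
    (hyπ : y ≤ π) (h : Real.cos x ≠ Real.cos y) :
    ∑ k ∈ Finset.range (n + 1),
        (if k = 0 then (1 / 2 : ℝ) else 1) * Real.cos ((k : ℝ) * y) *
          Real.cos (((n : ℝ) - (k : ℝ) + 1 / 2) * x) =
      Real.cos (x / 2) *
        (Real.sin (y / 2) * Real.sin (((n : ℝ) + 1 / 2) * y) -
          Real.sin (x / 2) * Real.sin (((n : ℝ) + 1 / 2) * x)) /
        (Real.cos x - Real.cos y) :=
  sum_eps_cos_cos_general n x y h
end

section
/- In dimension 2, for x₁, x₂ with cos x₁ ≠ cos x₂, the triangular Dirichlet kernel D_n^1(x₁,x₂) = ∑_{(k₁,k₂)∈ℤ², |k₁|+|k₂|≤n} e^{i(k₁x₁+k₂x₂)} equals 2·(cos(x₁/2)cos((n+1/2)x₁) - cos(x₂/2)cos((n+1/2)x₂))/(cos x₁ - cos x₂). -/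
open Real Finset

/-!
Split the ℓ¹ ball by the parity of `k₁ + k₂ + n` into two rotated squares: the points
`(m - 1 - i - j, j - i)` with `i, j < m`, for `m = n + 1` and `m = n`. On such a square
`z ^ k₁ * w ^ k₂ = z ^ (m - 1) * p ^ i * q ^ j` with `p = (z w)⁻¹` and `q = w / z`, so its sum is
a product of two geometric sums. Since `z + z⁻¹ - w - w⁻¹ = z (1 - p) (1 - q)`, multiplying by this
factor gives `z ^ m + z⁻¹ ^ m - w ^ m - w⁻¹ ^ m`. For `z = e^{i x₁}`, `w = e^{i x₂}` this is
`2 cos (m x₁) - 2 cos (m x₂)`, and the product-to-sum formula for `m = n + 1` and `m = n` together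
gives the numerator.
-/

noncomputable def l1Ball (n : ℕ) : Finset (ℤ × ℤ) :=
  (Icc (-(n : ℤ)) n ×ˢ Icc (-(n : ℤ)) n).filter (fun k => k.1.natAbs + k.2.natAbs ≤ n)

def diagonalSquareEmbedding (m : ℕ) (ij : ℕ × ℕ) : ℤ × ℤ :=
  ((m : ℤ) - 1 - ij.1 - ij.2, (ij.2 : ℤ) - ij.1)

lemma diagonalSquareEmbedding_injective (m : ℕ) :
    Function.Injective (diagonalSquareEmbedding m) := by
  rintro ⟨i, j⟩ ⟨i', j'⟩ h
  simp only [diagonalSquareEmbedding, Prod.mk.injEq] at h ⊢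
  omega

def diagonalSquare (m : ℕ) : Finset (ℤ × ℤ) :=
  (range m ×ˢ range m).image (diagonalSquareEmbedding m)

lemma l1Ball_eq_union (n : ℕ) : l1Ball n = diagonalSquare (n + 1) ∪ diagonalSquare n := by
  ext ⟨a, b⟩
  simp only [l1Ball, diagonalSquare, diagonalSquareEmbedding, mem_filter, mem_union, mem_image,
    mem_product, mem_range, mem_Icc, Prod.exists, Prod.mk.injEq]
  constructor
  · rintro ⟨-, hab⟩
    rcases Int.emod_two_eq_zero_or_one (n + a + b) with h | h
    · exact Or.inl ⟨((n - a - b) / 2).toNat, ((n - a + b) / 2).toNat, by omega⟩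
    · exact Or.inr ⟨((n - 1 - a - b) / 2).toNat, ((n - 1 - a + b) / 2).toNat, by omega⟩
  · rintro (⟨i, j, hij, rfl, rfl⟩ | ⟨i, j, hij, rfl, rfl⟩) <;> omega

lemma disjoint_diagonalSquare_succ (n : ℕ) :
    Disjoint (diagonalSquare (n + 1)) (diagonalSquare n) := by
  simp only [diagonalSquare, disjoint_left, mem_image, diagonalSquareEmbedding, Prod.exists,
    not_exists, not_and]
  rintro _ ⟨i, j, -, rfl⟩ i' j' - h
  rw [Prod.mk.injEq] at h
  omega

section Field

variable {K : Type*} [Field K] {z w : K}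

lemma sum_diagonalSquare_mul (hz : z ≠ 0) (hw : w ≠ 0) (m : ℕ) :
    (z + z⁻¹ - w - w⁻¹) * ∑ k ∈ diagonalSquare m, z ^ k.1 * w ^ k.2 =
      z ^ m + z⁻¹ ^ m - w ^ m - w⁻¹ ^ m := by
  have hterm : ∀ i j : ℕ, z * (z ^ ((m : ℤ) - 1 - i - j) * w ^ ((j : ℤ) - i)) =
      z ^ m * ((z * w)⁻¹ ^ i * (w / z) ^ j) := by
    intro i j
    simp only [zpow_sub₀ hz, zpow_sub₀ hw, zpow_natCast, zpow_one, div_eq_mul_inv, mul_inv,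
      mul_pow, inv_pow]
    field_simp
  have hsum : z * ∑ k ∈ diagonalSquare m, z ^ k.1 * w ^ k.2 =
      z ^ m * ((∑ i ∈ range m, (z * w)⁻¹ ^ i) * ∑ j ∈ range m, (w / z) ^ j) := by
    rw [diagonalSquare, sum_image (diagonalSquareEmbedding_injective m).injOn, sum_product,
      sum_mul_sum, mul_sum, mul_sum]
    refine sum_congr rfl fun i _ => ?_
    rw [mul_sum, mul_sum]
    exact sum_congr rfl fun j _ => hterm i j
  calc (z + z⁻¹ - w - w⁻¹) * ∑ k ∈ diagonalSquare m, z ^ k.1 * w ^ k.2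
      = (1 - (z * w)⁻¹) * (1 - w / z) * (z * ∑ k ∈ diagonalSquare m, z ^ k.1 * w ^ k.2) := by
        field_simp
        ring
    _ = z ^ m * (1 - (z * w)⁻¹ ^ m) * (1 - (w / z) ^ m) := by
        rw [hsum, ← mul_neg_geom_sum, ← mul_neg_geom_sum]
        ring
    _ = z ^ m + z⁻¹ ^ m - w ^ m - w⁻¹ ^ m := by
        rw [inv_pow, inv_pow, inv_pow, mul_pow, div_pow]
        field_simp
        ring

lemma sum_l1Ball_mul (hz : z ≠ 0) (hw : w ≠ 0) (n : ℕ) :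
    (z + z⁻¹ - w - w⁻¹) * ∑ k ∈ l1Ball n, z ^ k.1 * w ^ k.2 =
      (z ^ (n + 1) + z⁻¹ ^ (n + 1) + z ^ n + z⁻¹ ^ n) -
        (w ^ (n + 1) + w⁻¹ ^ (n + 1) + w ^ n + w⁻¹ ^ n) := by
  rw [l1Ball_eq_union, sum_union (disjoint_diagonalSquare_succ n), mul_add,
    sum_diagonalSquare_mul hz hw, sum_diagonalSquare_mul hz hw]
  ring

end Field

lemma cexp_I_mul_pow_add_inv_pow (x : ℂ) (m : ℕ) :
    Complex.exp (Complex.I * x) ^ m + (Complex.exp (Complex.I * x))⁻¹ ^ m =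
      2 * Complex.cos (m * x) := by
  rw [← Complex.exp_neg, ← Complex.exp_nat_mul, ← Complex.exp_nat_mul, Complex.cos]
  ring_nf

lemma cexp_I_mul_pow_succ_add_pow (x : ℂ) (n : ℕ) :
    Complex.exp (Complex.I * x) ^ (n + 1) + (Complex.exp (Complex.I * x))⁻¹ ^ (n + 1) +
        Complex.exp (Complex.I * x) ^ n + (Complex.exp (Complex.I * x))⁻¹ ^ n =
      4 * (Complex.cos (x / 2) * Complex.cos ((n + 1 / 2) * x)) := by
  have hsucc := cexp_I_mul_pow_add_inv_pow x (n + 1)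
  have hprod : 2 * (Complex.cos (x / 2) * Complex.cos ((n + 1 / 2) * x)) =
      Complex.cos ((n + 1) * x) + Complex.cos (n * x) := by
    rw [show ((n : ℂ) + 1) * x = (n + 1 / 2) * x + x / 2 by ring,
      show (n : ℂ) * x = (n + 1 / 2) * x - x / 2 by ring, Complex.cos_add, Complex.cos_sub]
    ring
  rw [Nat.cast_succ] at hsucc
  linear_combination hsucc + cexp_I_mul_pow_add_inv_pow x n - 2 * hprod

/-- In dimension 2, for `x₁, x₂` with `cos x₁ ≠ cos x₂`, the triangular Dirichlet kernel
`D_n^1(x₁,x₂) = ∑_{(k₁,k₂)∈ℤ², |k₁|+|k₂|≤n} e^{i(k₁x₁+k₂x₂)}` equals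
`2 (cos (x₁/2) cos ((n+1/2)x₁) - cos (x₂/2) cos ((n+1/2)x₂)) / (cos x₁ - cos x₂)`. -/
theorem triangular_dirichlet_kernel_eq (n : ℕ) (x₁ x₂ : ℝ)
    (h : Real.cos x₁ ≠ Real.cos x₂) :
    ∑ k ∈ (Finset.Icc (-(n : ℤ)) (n : ℤ) ×ˢ Finset.Icc (-(n : ℤ)) (n : ℤ)).filter
        (fun k => k.1.natAbs + k.2.natAbs ≤ n),
      Complex.exp (Complex.I * ((k.1 : ℂ) * (x₁ : ℂ) + (k.2 : ℂ) * (x₂ : ℂ))) =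
      ((2 * (Real.cos (x₁ / 2) * Real.cos (((n : ℝ) + 1 / 2) * x₁) -
          Real.cos (x₂ / 2) * Real.cos (((n : ℝ) + 1 / 2) * x₂)) /
        (Real.cos x₁ - Real.cos x₂) : ℝ) : ℂ) := by
  set z := Complex.exp (Complex.I * x₁)
  set w := Complex.exp (Complex.I * x₂)
  have hterm (k : ℤ × ℤ) :
      Complex.exp (Complex.I * ((k.1 : ℂ) * x₁ + (k.2 : ℂ) * x₂)) = z ^ k.1 * w ^ k.2 := by
    rw [← Complex.exp_int_mul, ← Complex.exp_int_mul, ← Complex.exp_add]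
    ring_nf
  have hc : z + z⁻¹ - w - w⁻¹ = 2 * (Complex.cos x₁ - Complex.cos x₂) := by
    have h₁ := cexp_I_mul_pow_add_inv_pow x₁ 1
    have h₂ := cexp_I_mul_pow_add_inv_pow x₂ 1
    simp only [pow_one, Nat.cast_one, one_mul] at h₁ h₂
    linear_combination h₁ - h₂
  have hkernel := sum_l1Ball_mul (Complex.exp_ne_zero _) (Complex.exp_ne_zero _) n (z := z) (w := w)
  rw [hc, cexp_I_mul_pow_succ_add_pow, cexp_I_mul_pow_succ_add_pow] at hkernel
  have hcos : Complex.cos x₁ - Complex.cos x₂ ≠ 0 := by exact_mod_cast sub_ne_zero.mpr h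
  change ∑ k ∈ l1Ball n, _ = _
  push_cast
  rw [sum_congr rfl fun k _ => hterm k, eq_div_iff hcos]
  linear_combination hkernel / 2
end

section
/- Let f : ℝ^d → ℂ be measurable and define its non-increasing majorant η(x) := sup_{‖t‖_r ≥ ‖x‖_r} |f(t)| for some fixed 1 ≤ r ≤ ∞. Then f belongs to the homogeneous Herz space E_∞(ℝ^d) if and only if η ∈ L¹(ℝ^d), and moreover C^{-1}‖η‖₁ ≤ ‖f‖_{E_∞} ≤ C‖η‖₁ for a constant C depending only on d and r. -/
open MeasureTheory ENNReal Real

/-- The annulus `P_k = {x ∈ ℝ^d : 2^{k-1} π ≤ ‖x‖ < 2^k π}` (sup norm on `ℝ^d`). -/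
def herzAnnulus (d : ℕ) (k : ℤ) : Set (Fin d → ℝ) :=
  {x | (2 : ℝ) ^ (k - 1) * π ≤ ‖x‖ ∧ ‖x‖ < (2 : ℝ) ^ k * π}

/-- The homogeneous Herz norm `‖f‖_{E_∞} = ∑_{k∈ℤ} 2^{kd} sup_{P_k} |f|`. -/
noncomputable def herzNorm (d : ℕ) (f : (Fin d → ℝ) → ℂ) : ℝ≥0∞ :=
  ∑' k : ℤ, (2 : ℝ≥0∞) ^ (k * (d : ℤ)) * ⨆ x ∈ herzAnnulus d k, (‖f x‖₊ : ℝ≥0∞)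

/-- The non-increasing majorant `η(x) = sup_{‖t‖ ≥ ‖x‖} |f(t)|`. -/
noncomputable def nonincMajorant (d : ℕ) (f : (Fin d → ℝ) → ℂ) (x : Fin d → ℝ) : ℝ≥0∞ :=
  ⨆ (t : Fin d → ℝ) (_ : ‖x‖ ≤ ‖t‖), (‖f t‖₊ : ℝ≥0∞)

/-!
On the annulus `P_k` the majorant `η` lies between `sup_{P_{k+1}} |f|` and
`∑_{j ≥ k} sup_{P_j} |f|`, while `|P_k|` is comparable to `2^{kd}`. Integrating over the annuli,
the lower estimate gives `‖f‖_{E_∞} ≲ ‖η‖₁` at once, and the upper one gives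
`‖η‖₁ ≲ ∑_j sup_{P_j} |f| · ∑_{k ≤ j} 2^{kd} ≲ ‖f‖_{E_∞}` after exchanging the sums, the inner
geometric sum being dominated by its last term.
-/

open Set

lemma ENNReal.two_zpow_add_one_mul (k : ℤ) (d : ℕ) :
    (2 : ℝ≥0∞) ^ ((k + 1) * d) = 2 ^ d * 2 ^ (k * d) := by
  rw [add_mul, one_mul, ENNReal.zpow_add two_ne_zero ofNat_ne_top, zpow_natCast, mul_comm]

lemma ENNReal.two_zpow_pow (k : ℤ) (d : ℕ) : ((2 : ℝ≥0∞) ^ k) ^ d = 2 ^ (k * d) := by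
  rw [← ENNReal.coe_ofNat, ← ENNReal.coe_zpow two_ne_zero, ← ENNReal.coe_pow, ← zpow_natCast,
    ← zpow_mul, ENNReal.coe_zpow two_ne_zero]

lemma ENNReal.ofReal_two_zpow_mul_pow (k : ℤ) (d : ℕ) (a : ℝ) :
    ENNReal.ofReal (2 ^ k * a) ^ d = 2 ^ (k * d) * ENNReal.ofReal a ^ d := by
  have h2k : ENNReal.ofReal ((2 : ℝ) ^ k) = 2 ^ k := by
    rw [← NNReal.coe_ofNat, ← NNReal.coe_zpow, ENNReal.ofReal_coe_nnreal,
      ENNReal.coe_zpow two_ne_zero, ENNReal.coe_ofNat]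
  rw [ENNReal.ofReal_mul (by positivity), h2k, mul_pow, ENNReal.two_zpow_pow]

lemma ENNReal.tsum_mul_tsum_ite_le_comm {ι : Type*} [LE ι] [DecidableLE ι] (a b : ι → ℝ≥0∞) :
    ∑' i, a i * ∑' j, (if i ≤ j then b j else 0) =
      ∑' j, (∑' i, if i ≤ j then a i else 0) * b j := by
  simp_rw [← ENNReal.tsum_mul_left, ← ENNReal.tsum_mul_right]
  rw [ENNReal.tsum_comm]
  exact tsum_congr fun j => tsum_congr fun i => by split_ifs <;> simp

lemma ENNReal.tsum_ite_le_two_zpow_le {d : ℕ} (hd : 0 < d) (j : ℤ) :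
    ∑' k : ℤ, (if k ≤ j then (2 : ℝ≥0∞) ^ (k * d) else 0) ≤ 2 * 2 ^ (j * d) := by
  have hinj : Function.Injective fun n : ℕ => j - n := fun m n h => by simpa using h
  have hsupp : Function.support (fun k : ℤ => if k ≤ j then (2 : ℝ≥0∞) ^ (k * d) else 0)
      ⊆ range fun n : ℕ => j - n := fun k hk => by
    have : k ≤ j := by by_contra h; simp [h] at hk
    exact ⟨(j - k).toNat, by simp only; omega⟩
  have hterm (n : ℕ) : (2 : ℝ≥0∞) ^ ((j - n) * d) = 2 ^ (j * d) * (2 ^ (-(d : ℤ))) ^ n := by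
    rw [ENNReal.two_zpow_pow, ← ENNReal.zpow_add two_ne_zero ofNat_ne_top]
    congr 1
    ring
  have hratio : (2 : ℝ≥0∞) ^ (-(d : ℤ)) ≤ 2⁻¹ := by
    rw [← zpow_neg_one]
    exact ENNReal.zpow_le_of_le one_le_two (by omega)
  calc ∑' k : ℤ, (if k ≤ j then (2 : ℝ≥0∞) ^ (k * d) else 0)
      = ∑' n : ℕ, 2 ^ (j * d) * (2 ^ (-(d : ℤ))) ^ n := by
        rw [← hinj.tsum_eq hsupp]
        exact tsum_congr fun n => by simp [hterm]
    _ = 2 ^ (j * d) * ∑' n : ℕ, (2 ^ (-(d : ℤ))) ^ n := ENNReal.tsum_mul_left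
    _ ≤ 2 ^ (j * d) * ∑' n : ℕ, (2⁻¹ : ℝ≥0∞) ^ n := by gcongr
    _ = 2 * 2 ^ (j * d) := by
        rw [ENNReal.tsum_geometric, ENNReal.one_sub_inv_two, inv_inv, mul_comm]

section

variable {d : ℕ}

lemma measurableSet_herzAnnulus (d : ℕ) (k : ℤ) : MeasurableSet (herzAnnulus d k) :=
  measurableSet_Ico.preimage measurable_norm

lemma norm_pos_of_mem_herzAnnulus {k : ℤ} {x : Fin d → ℝ} (hx : x ∈ herzAnnulus d k) :
    0 < ‖x‖ :=
  lt_of_lt_of_le (by positivity) hx.1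

lemma le_of_mem_herzAnnulus {k j : ℤ} {x t : Fin d → ℝ} (hx : x ∈ herzAnnulus d k)
    (ht : t ∈ herzAnnulus d j) (hxt : ‖x‖ ≤ ‖t‖) : k ≤ j := by
  have : (2 : ℝ) ^ (k - 1) < 2 ^ j :=
    lt_of_mul_lt_mul_right ((hx.1.trans hxt).trans_lt ht.2) pi_pos.le
  have := (zpow_lt_zpow_iff_right₀ (by norm_num : (1 : ℝ) < 2)).mp this
  omega

lemma pairwise_disjoint_herzAnnulus (d : ℕ) :
    Pairwise (Function.onFun Disjoint (herzAnnulus d)) := by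
  intro k j hkj
  refine Set.disjoint_left.mpr fun x hk hj => hkj ?_
  exact le_antisymm (le_of_mem_herzAnnulus hk hj le_rfl) (le_of_mem_herzAnnulus hj hk le_rfl)

lemma iUnion_herzAnnulus (d : ℕ) : ⋃ k, herzAnnulus d k = {0}ᶜ := by
  ext x
  simp only [mem_iUnion, mem_compl_singleton_iff, ← norm_pos_iff]
  constructor
  · rintro ⟨k, hk⟩
    exact norm_pos_of_mem_herzAnnulus hk
  · intro hx
    obtain ⟨n, hn1, hn2⟩ := exists_mem_Ico_zpow (div_pos hx pi_pos) (by norm_num : (1 : ℝ) < 2)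
    refine ⟨n + 1, ?_, ?_⟩
    · rw [add_sub_cancel_right]
      exact (le_div_iff₀ pi_pos).mp hn1
    · exact (div_lt_iff₀ pi_pos).mp hn2

lemma volume_herzAnnulus_le (d : ℕ) (k : ℤ) :
    volume (herzAnnulus d k) ≤ 2 ^ d * ENNReal.ofReal π ^ d * 2 ^ (k * d) := by
  have hball : herzAnnulus d k ⊆ Metric.ball 0 (2 ^ k * π) := fun x hx => by
    simpa using hx.2
  calc volume (herzAnnulus d k) ≤ volume (Metric.ball (0 : Fin d → ℝ) (2 ^ k * π)) :=
        measure_mono hball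
    _ = ENNReal.ofReal (2 ^ (k + 1) * π) ^ d := by
        rw [Real.volume_pi_ball _ (by positivity), Fintype.card_fin,
          ENNReal.ofReal_pow (by positivity), zpow_add_one₀ two_ne_zero]
        congr 2
        ring
    _ = _ := by
        rw [ENNReal.ofReal_two_zpow_mul_pow, ENNReal.two_zpow_add_one_mul]
        ring

lemma le_volume_herzAnnulus (hd : 0 < d) (k : ℤ) :
    ENNReal.ofReal π ^ d * 2 ^ (k * d) ≤ 2 ^ d * volume (herzAnnulus d k) := by
  set a : ℝ := 2 ^ (k - 1) * π
  have ha : 0 < a := by positivity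
  have hbox : (univ.pi fun _ : Fin d => Ico a (2 * a)) ⊆ herzAnnulus d k := by
    intro x hx
    simp only [mem_univ_pi, mem_Ico] at hx
    have h2a : 2 * a = 2 ^ k * π := by
      simp only [a]; rw [← mul_assoc, ← zpow_one_add₀ two_ne_zero, add_sub_cancel]
    refine ⟨(hx ⟨0, hd⟩).1.trans ((le_abs_self _).trans (norm_le_pi_norm x ⟨0, hd⟩)), ?_⟩
    rw [← h2a, pi_norm_lt_iff (by positivity)]
    intro i
    rw [Real.norm_eq_abs, abs_of_pos (ha.trans_le (hx i).1)]
    exact (hx i).2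
  calc ENNReal.ofReal π ^ d * 2 ^ (k * d) = 2 ^ d * ENNReal.ofReal a ^ d := by
        rw [ENNReal.ofReal_two_zpow_mul_pow, ← mul_assoc, mul_comm _ (2 ^ _),
          ← ENNReal.two_zpow_add_one_mul, sub_add_cancel, mul_comm]
    _ = 2 ^ d * volume (univ.pi fun _ : Fin d => Ico a (2 * a)) := by
        rw [Real.volume_pi_Ico, Finset.prod_const, Finset.card_univ, Fintype.card_fin]
        congr 3
        ring
    _ ≤ 2 ^ d * volume (herzAnnulus d k) := by gcongr

lemma lintegral_eq_tsum_setLIntegral_herzAnnulus (hd : 0 < d) (g : (Fin d → ℝ) → ℝ≥0∞) :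
    ∫⁻ x, g x = ∑' k, ∫⁻ x in herzAnnulus d k, g x := by
  have : Nonempty (Fin d) := ⟨⟨0, hd⟩⟩
  rw [← lintegral_iUnion (measurableSet_herzAnnulus d) (pairwise_disjoint_herzAnnulus d),
    iUnion_herzAnnulus, restrict_compl_singleton]

noncomputable def herzAnnulusSup (d : ℕ) (f : (Fin d → ℝ) → ℂ) (k : ℤ) : ℝ≥0∞ :=
  ⨆ x ∈ herzAnnulus d k, (‖f x‖₊ : ℝ≥0∞)

lemma herzNorm_eq_tsum (d : ℕ) (f : (Fin d → ℝ) → ℂ) :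
    herzNorm d f = ∑' k : ℤ, 2 ^ (k * d) * herzAnnulusSup d f k := rfl

lemma nonincMajorant_le_tsum_herzAnnulusSup (f : (Fin d → ℝ) → ℂ) {k : ℤ} {x : Fin d → ℝ}
    (hx : x ∈ herzAnnulus d k) :
    nonincMajorant d f x ≤ ∑' j, if k ≤ j then herzAnnulusSup d f j else 0 := by
  refine iSup₂_le fun t hxt => ?_
  obtain ⟨j, hj⟩ : ∃ j, t ∈ herzAnnulus d j := by
    rw [← mem_iUnion, iUnion_herzAnnulus, mem_compl_singleton_iff, ← norm_pos_iff]
    exact (norm_pos_of_mem_herzAnnulus hx).trans_le hxt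
  calc (‖f t‖₊ : ℝ≥0∞) ≤ herzAnnulusSup d f j :=
        le_iSup₂ (f := fun y (_ : y ∈ herzAnnulus d j) => (‖f y‖₊ : ℝ≥0∞)) t hj
    _ = if k ≤ j then herzAnnulusSup d f j else 0 :=
        (if_pos (le_of_mem_herzAnnulus hx hj hxt)).symm
    _ ≤ _ := ENNReal.le_tsum j

lemma herzAnnulusSup_succ_le_nonincMajorant (f : (Fin d → ℝ) → ℂ) {k : ℤ} {x : Fin d → ℝ}
    (hx : x ∈ herzAnnulus d k) : herzAnnulusSup d f (k + 1) ≤ nonincMajorant d f x := by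
  refine iSup₂_le fun t ht => ?_
  have hxt : ‖x‖ ≤ ‖t‖ := hx.2.le.trans (by simpa using ht.1)
  exact le_iSup₂ (f := fun y (_ : ‖x‖ ≤ ‖y‖) => (‖f y‖₊ : ℝ≥0∞)) t hxt

lemma lintegral_nonincMajorant_le (hd : 0 < d) (f : (Fin d → ℝ) → ℂ) :
    ∫⁻ x, nonincMajorant d f x ≤ 2 ^ (d + 1) * ENNReal.ofReal π ^ d * herzNorm d f := by
  set S := herzAnnulusSup d f
  set c := 2 ^ d * ENNReal.ofReal π ^ d
  calc ∫⁻ x, nonincMajorant d f x = ∑' k, ∫⁻ x in herzAnnulus d k, nonincMajorant d f x :=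
        lintegral_eq_tsum_setLIntegral_herzAnnulus hd _
    _ ≤ ∑' k : ℤ, c * 2 ^ (k * d) * ∑' j : ℤ, if k ≤ j then S j else 0 := by
        refine ENNReal.tsum_le_tsum fun k => ?_
        calc ∫⁻ x in herzAnnulus d k, nonincMajorant d f x
            ≤ ∫⁻ _ in herzAnnulus d k, ∑' j, if k ≤ j then S j else 0 :=
              setLIntegral_mono' (measurableSet_herzAnnulus d k)
                fun x hx => nonincMajorant_le_tsum_herzAnnulusSup f hx
          _ = (∑' j, if k ≤ j then S j else 0) * volume (herzAnnulus d k) :=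
              setLIntegral_const _ _
          _ ≤ _ := by
              rw [mul_comm]
              gcongr
              exact volume_herzAnnulus_le d k
    _ = c * ∑' j : ℤ, (∑' k : ℤ, if k ≤ j then (2 : ℝ≥0∞) ^ (k * d) else 0) * S j := by
        simp_rw [mul_assoc]
        rw [ENNReal.tsum_mul_left, ENNReal.tsum_mul_tsum_ite_le_comm]
    _ ≤ c * ∑' j : ℤ, 2 * 2 ^ (j * d) * S j := by
        gcongr with j
        exact ENNReal.tsum_ite_le_two_zpow_le hd j
    _ = 2 ^ (d + 1) * ENNReal.ofReal π ^ d * herzNorm d f := by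
        simp_rw [mul_assoc]
        rw [ENNReal.tsum_mul_left, herzNorm_eq_tsum, pow_succ]
        ring

lemma ofReal_pi_pow_mul_herzNorm_le (hd : 0 < d) (f : (Fin d → ℝ) → ℂ) :
    ENNReal.ofReal π ^ d * herzNorm d f ≤ 4 ^ d * ∫⁻ x, nonincMajorant d f x := by
  set S := herzAnnulusSup d f
  have hterm (k : ℤ) : ENNReal.ofReal π ^ d * (2 ^ ((k + 1) * d) * S (k + 1)) ≤
      4 ^ d * ∫⁻ x in herzAnnulus d k, nonincMajorant d f x :=
    calc ENNReal.ofReal π ^ d * (2 ^ ((k + 1) * d) * S (k + 1))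
        = 2 ^ d * ((ENNReal.ofReal π ^ d * 2 ^ (k * d)) * S (k + 1)) := by
          rw [ENNReal.two_zpow_add_one_mul]
          ring
      _ ≤ 2 ^ d * ((2 ^ d * volume (herzAnnulus d k)) * S (k + 1)) := by
          gcongr 2 ^ d * (?_ * _)
          exact le_volume_herzAnnulus hd k
      _ = 4 ^ d * ∫⁻ _ in herzAnnulus d k, S (k + 1) := by
          rw [setLIntegral_const, show (4 : ℝ≥0∞) = 2 * 2 by norm_num, mul_pow]
          ring
      _ ≤ 4 ^ d * ∫⁻ x in herzAnnulus d k, nonincMajorant d f x := by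
          gcongr 4 ^ d * ?_
          exact setLIntegral_mono' (measurableSet_herzAnnulus d k)
            fun x hx => herzAnnulusSup_succ_le_nonincMajorant f hx
  calc ENNReal.ofReal π ^ d * herzNorm d f
      = ENNReal.ofReal π ^ d * ∑' k : ℤ, 2 ^ ((k + 1) * d) * S (k + 1) := by
        rw [herzNorm_eq_tsum, ← (Equiv.addRight (1 : ℤ)).tsum_eq]
        rfl
    _ = ∑' k : ℤ, ENNReal.ofReal π ^ d * (2 ^ ((k + 1) * d) * S (k + 1)) :=
        ENNReal.tsum_mul_left.symm
    _ ≤ ∑' k, 4 ^ d * ∫⁻ x in herzAnnulus d k, nonincMajorant d f x :=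
        ENNReal.tsum_le_tsum hterm
    _ = 4 ^ d * ∫⁻ x, nonincMajorant d f x := by
        rw [ENNReal.tsum_mul_left, lintegral_eq_tsum_setLIntegral_herzAnnulus hd]

end

/-- `f ∈ E_∞(ℝ^d)` if and only if its non-increasing majorant `η` is integrable, and
`C⁻¹ ‖η‖₁ ≤ ‖f‖_{E_∞} ≤ C ‖η‖₁` for a constant `C` depending only on the dimension. -/
theorem herz_iff_majorant_integrable (d : ℕ) (hd : 0 < d) :
    ∃ C : ℝ≥0∞, 0 < C ∧ C < ∞ ∧ ∀ f : (Fin d → ℝ) → ℂ, Measurable f →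
      ((herzNorm d f < ∞ ↔ (∫⁻ x, nonincMajorant d f x) < ∞) ∧
        C⁻¹ * ∫⁻ x, nonincMajorant d f x ≤ herzNorm d f ∧
        herzNorm d f ≤ C * ∫⁻ x, nonincMajorant d f x) := by
  set c := ENNReal.ofReal π ^ d
  have hc0 : c ≠ 0 := pow_ne_zero _ (ENNReal.ofReal_pos.2 pi_pos).ne'
  have hctop : c ≠ ∞ := ENNReal.pow_ne_top ENNReal.ofReal_ne_top
  set C := max (2 ^ (d + 1) * c) (c⁻¹ * 4 ^ d)
  have hC0 : C ≠ 0 := (mul_ne_zero (by positivity) hc0).bot_lt.trans_le (le_max_left _ _) |>.ne'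
  have hCtop : C ≠ ∞ := max_ne_top (ENNReal.mul_ne_top (by simp) hctop)
    (ENNReal.mul_ne_top (ENNReal.inv_ne_top.2 hc0) (by simp))
  refine ⟨C, pos_iff_ne_zero.2 hC0, hCtop.lt_top, fun f _ => ?_⟩
  have hupper : ∫⁻ x, nonincMajorant d f x ≤ C * herzNorm d f :=
    (lintegral_nonincMajorant_le hd f).trans (by gcongr; exact le_max_left _ _)
  have hlower : herzNorm d f ≤ C * ∫⁻ x, nonincMajorant d f x := by
    refine ((ENNReal.mul_le_iff_le_inv hc0 hctop).1 (ofReal_pi_pow_mul_herzNorm_le hd f)).trans ?_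
    rw [← mul_assoc]
    gcongr
    exact le_max_right _ _
  exact ⟨⟨fun h => hupper.trans_lt (ENNReal.mul_lt_top hCtop.lt_top h),
    fun h => hlower.trans_lt (ENNReal.mul_lt_top hCtop.lt_top h)⟩,
    (ENNReal.inv_mul_le_iff hC0 hCtop).2 hupper, hlower⟩
end

section
/- If f ∈ W(L_∞, ℓ¹^{v_d})(ℝ^d), i.e. ∑_{k∈ℤ^d} (sup_{x∈[0,1)^d} |f(x+k)|)·(1+‖k‖_∞)^d < ∞, then f belongs to the homogeneous Herz space E_∞(ℝ^d) and ‖f‖_{E_∞} ≤ C‖f‖_{W(L_∞,ℓ¹^{v_d})}. -/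
open MeasureTheory ENNReal Real

/-- The weighted Wiener amalgam norm
`‖f‖_{W(L_∞,ℓ¹^{v_d})} = ∑_{k∈ℤ^d} (sup_{x∈[0,1)^d} |f(x+k)|) (1+‖k‖_∞)^d`. -/
noncomputable def wienerAmalgamNorm (d : ℕ) (f : (Fin d → ℝ) → ℂ) : ℝ≥0∞ :=
  ∑' k : Fin d → ℤ,
    (⨆ x ∈ Set.pi Set.univ (fun _ : Fin d => Set.Ico (0 : ℝ) 1),
        (‖f (x + fun i => (k i : ℝ))‖₊ : ℝ≥0∞)) *
      ENNReal.ofReal ((1 + ‖(fun i => (k i : ℝ) : Fin d → ℝ)‖) ^ d)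

/-! A point `x` of the annulus `P_k` lies in the unit cube `⌊x⌋ + [0,1)^d`, and
`2^k ≤ 2^{k-1} π ≤ ‖x‖_∞ ≤ 1 + ‖⌊x⌋‖_∞`. So `sup_{P_k} |f|` is at most the sum of the suprema of
`|f|` over the cubes `n + [0,1)^d` with `2^k ≤ 1 + ‖n‖_∞`. Exchanging the two sums, each cube `n` is
charged `∑_{2^k ≤ 1 + ‖n‖_∞} 2^{kd} ≤ 2 (1 + ‖n‖_∞)^d`, a geometric series, so `C = 2` works
(for `d = 0` every annulus is empty). -/

lemma tsum_two_zpow_sub_mul_le {d : ℕ} (hd : d ≠ 0) (m : ℤ) :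
    ∑' j : ℕ, (2 : ℝ≥0∞) ^ ((m - j) * d) ≤ 2 * 2 ^ (m * d) := by
  have h2 : (2 : ℝ≥0∞) ≠ 0 := two_ne_zero
  have hterm : ∀ j : ℕ, (2 : ℝ≥0∞) ^ ((m - j) * d) = 2 ^ (m * d) * ((2 ^ d)⁻¹) ^ j := by
    intro j
    rw [sub_mul, ENNReal.zpow_sub h2 ofNat_ne_top, ← ENNReal.inv_pow, ← pow_mul,
      mul_comm d j]
    norm_cast
  have hratio : (1 - ((2 : ℝ≥0∞) ^ d)⁻¹)⁻¹ ≤ 2 := by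
    calc (1 - ((2 : ℝ≥0∞) ^ d)⁻¹)⁻¹ ≤ (1 - 2⁻¹)⁻¹ := by
          gcongr
          exact le_self_pow₀ one_le_two hd
      _ = 2 := by rw [ENNReal.one_sub_inv_two, inv_inv]
  simp only [hterm]
  rw [ENNReal.tsum_mul_left, ENNReal.tsum_geometric, mul_comm]
  gcongr

lemma tsum_ite_two_zpow_le {d : ℕ} (hd : d ≠ 0) {a : ℝ} (ha : 0 < a) :
    ∑' k : ℤ, (if (2 : ℝ) ^ k ≤ a then (2 : ℝ≥0∞) ^ (k * d) else 0) ≤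
      2 * ENNReal.ofReal (a ^ d) := by
  set m := Int.log 2 a
  have hle_iff : ∀ k : ℤ, (2 : ℝ) ^ k ≤ a ↔ k ≤ m := fun k => by
    exact_mod_cast Int.zpow_le_iff_le_log (b := 2) one_lt_two ha
  have hinj : Function.Injective fun j : ℕ => m - j := fun i j h => by simpa using h
  have hsupp : Function.support (fun k : ℤ => if (2 : ℝ) ^ k ≤ a then (2 : ℝ≥0∞) ^ (k * d) else 0)
      ⊆ Set.range fun j : ℕ => m - j := by
    intro k hk
    have hkm : k ≤ m := (hle_iff k).1 (by by_contra h; simp [h] at hk)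
    exact ⟨(m - k).toNat, by simp [Int.toNat_of_nonneg (sub_nonneg.2 hkm)]⟩
  rw [← hinj.tsum_eq hsupp]
  have hterm_le : ∀ j : ℕ, (2 : ℝ) ^ (m - j) ≤ a := fun j => (hle_iff _).2 (by omega)
  simp only [hterm_le, if_true]
  calc ∑' j : ℕ, (2 : ℝ≥0∞) ^ ((m - j) * d) ≤ 2 * 2 ^ (m * d) := tsum_two_zpow_sub_mul_le hd m
    _ ≤ 2 * ENNReal.ofReal (a ^ d) := by
      gcongr
      calc (2 : ℝ≥0∞) ^ (m * d) = ENNReal.ofReal (((2 : ℝ) ^ m) ^ d) := by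
            rw [← zpow_natCast, ← zpow_mul, ENNReal.ofReal, Real.toNNReal_zpow zero_le_two,
              ENNReal.coe_zpow (by norm_num)]
            norm_num
        _ ≤ ENNReal.ofReal (a ^ d) := by
            gcongr
            exact (hle_iff m).2 le_rfl

lemma norm_le_norm_floor_add_one {ι : Type*} [Fintype ι] (x : ι → ℝ) :
    ‖x‖ ≤ ‖fun i => (⌊x i⌋ : ℝ)‖ + 1 := by
  have hfract : ‖fun i => Int.fract (x i)‖ ≤ 1 :=
    (pi_norm_le_iff_of_nonneg zero_le_one).2 fun i => by
      rw [Real.norm_of_nonneg (Int.fract_nonneg _)]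
      exact (Int.fract_lt_one _).le
  calc ‖x‖ = ‖(fun i => (⌊x i⌋ : ℝ)) + fun i => Int.fract (x i)‖ := by
        congr; ext i; simp [Int.floor_add_fract]
    _ ≤ ‖fun i => (⌊x i⌋ : ℝ)‖ + 1 := norm_add_le_of_le le_rfl hfract

lemma two_zpow_le_norm_of_mem_herzAnnulus {d : ℕ} {k : ℤ} {x : Fin d → ℝ}
    (hx : x ∈ herzAnnulus d k) : (2 : ℝ) ^ k ≤ ‖x‖ :=
  calc (2 : ℝ) ^ k = 2 ^ (k - 1) * 2 := by rw [← zpow_add_one₀ two_ne_zero, sub_add_cancel]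
    _ ≤ 2 ^ (k - 1) * π := by gcongr; exact Real.two_le_pi
    _ ≤ ‖x‖ := hx.1

lemma herzAnnulus_dim_zero (k : ℤ) : herzAnnulus 0 k = ∅ :=
  Set.eq_empty_of_forall_notMem fun x hx => by
    have h := two_zpow_le_norm_of_mem_herzAnnulus hx
    rw [Subsingleton.elim x 0, norm_zero] at h
    exact (zpow_pos two_pos k).not_ge h

noncomputable def wienerLocalSup {ι E : Type*} [SeminormedAddGroup E] (f : (ι → ℝ) → E)
    (n : ι → ℤ) : ℝ≥0∞ :=
  ⨆ x ∈ Set.pi Set.univ (fun _ : ι => Set.Ico (0 : ℝ) 1), (‖f (x + fun i => (n i : ℝ))‖₊ : ℝ≥0∞)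

lemma nnnorm_le_wienerLocalSup_floor {ι E : Type*} [SeminormedAddGroup E] (f : (ι → ℝ) → E)
    (x : ι → ℝ) : (‖f x‖₊ : ℝ≥0∞) ≤ wienerLocalSup f fun i => ⌊x i⌋ := by
  have hx : (fun i => Int.fract (x i)) + (fun i => ((⌊x i⌋ : ℤ) : ℝ)) = x := by
    ext i; simp [Int.fract_add_floor]
  have hmem : (fun i => Int.fract (x i)) ∈ Set.pi Set.univ fun _ : ι => Set.Ico (0 : ℝ) 1 :=
    fun i _ => ⟨Int.fract_nonneg _, Int.fract_lt_one _⟩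
  have := le_iSup₂ (f := fun y (_ : y ∈ Set.pi Set.univ fun _ : ι => Set.Ico (0 : ℝ) 1) =>
    (‖f (y + fun i => ((⌊x i⌋ : ℤ) : ℝ))‖₊ : ℝ≥0∞)) _ hmem
  rwa [hx] at this

lemma iSup_herzAnnulus_le_tsum {d : ℕ} (f : (Fin d → ℝ) → ℂ) (k : ℤ) :
    ⨆ x ∈ herzAnnulus d k, (‖f x‖₊ : ℝ≥0∞) ≤
      ∑' n : Fin d → ℤ,
        if (2 : ℝ) ^ k ≤ 1 + ‖fun i => (n i : ℝ)‖ then wienerLocalSup f n else 0 := by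
  refine iSup₂_le fun x hx => ?_
  have hk : (2 : ℝ) ^ k ≤ 1 + ‖fun i => ((⌊x i⌋ : ℤ) : ℝ)‖ := by
    linarith [two_zpow_le_norm_of_mem_herzAnnulus hx, norm_le_norm_floor_add_one x]
  refine le_trans ?_ (ENNReal.le_tsum fun i => ⌊x i⌋)
  rw [if_pos hk]
  exact nnnorm_le_wienerLocalSup_floor f x

/-- If `f ∈ W(L_∞, ℓ¹^{v_d})(ℝ^d)` then `f ∈ E_∞(ℝ^d)` with
`‖f‖_{E_∞} ≤ C ‖f‖_{W(L_∞,ℓ¹^{v_d})}`. -/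
theorem herzNorm_le_wienerAmalgamNorm (d : ℕ) :
    ∃ C : ℝ≥0∞, C < ∞ ∧ ∀ f : (Fin d → ℝ) → ℂ, wienerAmalgamNorm d f < ∞ →
      herzNorm d f ≤ C * wienerAmalgamNorm d f := by
  refine ⟨2, ofNat_lt_top, fun f _ => ?_⟩
  rcases eq_or_ne d 0 with rfl | hd
  · simp [herzNorm, herzAnnulus_dim_zero]
  set w : (Fin d → ℤ) → ℝ := fun n => 1 + ‖fun i => (n i : ℝ)‖
  calc herzNorm d f
      ≤ ∑' k : ℤ, 2 ^ (k * d) * ∑' n, if (2 : ℝ) ^ k ≤ w n then wienerLocalSup f n else 0 :=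
        ENNReal.tsum_le_tsum fun k => by gcongr; exact iSup_herzAnnulus_le_tsum f k
    _ = ∑' n, (∑' k : ℤ, if (2 : ℝ) ^ k ≤ w n then (2 : ℝ≥0∞) ^ (k * d) else 0) *
          wienerLocalSup f n := by
        simp_rw [← ENNReal.tsum_mul_left, ← ENNReal.tsum_mul_right, mul_ite, ite_mul, mul_zero,
          zero_mul]
        exact ENNReal.tsum_comm
    _ ≤ ∑' n, 2 * ENNReal.ofReal (w n ^ d) * wienerLocalSup f n := by
        gcongr with n
        exact tsum_ite_two_zpow_le hd (by positivity)
    _ = 2 * wienerAmalgamNorm d f := by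
        rw [wienerAmalgamNorm, ← ENNReal.tsum_mul_left]
        exact tsum_congr fun n => by rw [mul_assoc, mul_comm (ENNReal.ofReal _)]; rfl
end

section
/- Let 0 < α ≤ 1 and A_k^{α-1} = binom(k+α-1, k). For all n ≥ 1 and u ∈ ℝ with sin(u/2) ≠ 0, |∑_{k=0}^{n-1} A_{n-1-k}^{α-1} e^{i(k+1/2)u}| ≤ C/|sin(u/2)|^α + C·n^{α-1}/|sin(u/2)| for a constant C depending only on α. -/
/-!
With `w = exp (i u)`, the kernel is `exp (i u / 2)` times the reflected sum, so its modulus is that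
of the partial sum `∑_{j<n} A_j^{α-1} z^j` of `(1 - z)^{-α}` at `z = w⁻¹`, where
`|1 - z| = 2 |sin (u / 2)|`. Split this sum at `m ≈ 1 / |1 - z|`. The head is at most
`∑_{j<m} A_j^{α-1} = A_{m-1}^α = O(m^α)`. Since the coefficients decrease and the geometric partial
sums are `O(1 / |1 - z|)`, Abel summation bounds the tail by `O(A_m^{α-1} / |1 - z|)`, and
`A_m^{α-1} = O(m^{α-1})`. Both parts are `O(|1 - z|^{-α})`.
-/

open Real Finset

/-- The Cesàro numbers `A_k^α = (α+1)(α+2)⋯(α+k)/k!`. -/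
noncomputable def cesaroA (α : ℝ) (k : ℕ) : ℝ :=
  (∏ i ∈ Finset.range k, (α + 1 + i)) / (Nat.factorial k)

lemma cesaroA_succ (β : ℝ) (k : ℕ) :
    cesaroA β (k + 1) = cesaroA β k * ((β + 1 + k) / (k + 1)) := by
  rw [cesaroA, cesaroA, prod_range_succ, Nat.factorial_succ]
  push_cast
  field_simp

lemma cesaroA_sub_one_succ (α : ℝ) (k : ℕ) :
    cesaroA (α - 1) (k + 1) = cesaroA α k * (α / (k + 1)) := by
  rw [cesaroA, cesaroA, prod_range_succ', Nat.factorial_succ]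
  push_cast
  simp only [sub_add_cancel, add_right_comm _ (1 : ℝ), add_assoc]
  field_simp
  ring

lemma cesaroA_succ_eq_add (α : ℝ) (k : ℕ) :
    cesaroA α (k + 1) = cesaroA α k + cesaroA (α - 1) (k + 1) := by
  rw [cesaroA_succ, cesaroA_sub_one_succ]
  field_simp
  ring

lemma sum_range_cesaroA_sub_one (α : ℝ) (k : ℕ) :
    ∑ j ∈ range (k + 1), cesaroA (α - 1) j = cesaroA α k := by
  induction k with
  | zero => simp [cesaroA]
  | succ k ih => rw [sum_range_succ, ih, cesaroA_succ_eq_add α k]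

lemma cesaroA_pos {β : ℝ} (hβ : 0 < β + 1) (k : ℕ) : 0 < cesaroA β k :=
  div_pos (prod_pos fun i _ => by positivity) (by exact_mod_cast k.factorial_pos)

lemma cesaroA_sub_one_antitone {α : ℝ} (hα0 : 0 < α) (hα1 : α ≤ 1) :
    Antitone (cesaroA (α - 1)) := by
  refine antitone_nat_of_succ_le fun k => ?_
  have hratio : (α - 1 + 1 + k) / (k + 1) ≤ 1 := by
    rw [div_le_one (by positivity)]
    linarith
  rw [cesaroA_succ]
  exact mul_le_of_le_one_right (cesaroA_pos (by linarith) k).le hratio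

lemma cesaroA_le_exp_mul_rpow {α : ℝ} (hα : 0 ≤ α) (k : ℕ) :
    cesaroA α k ≤ exp α * ((k : ℝ) + 1) ^ α := by
  have hprod : cesaroA α k = ∏ i ∈ range k, (1 + α / ((i : ℝ) + 1)) := by
    rw [cesaroA, ← prod_range_add_one_eq_factorial, Nat.cast_prod, ← prod_div_distrib]
    refine prod_congr rfl fun i _ => ?_
    push_cast
    field_simp
    ring
  have hharmonic : (harmonic k : ℝ) ≤ 1 + log ((k : ℝ) + 1) := by
    refine (harmonic_le_one_add_log k).trans ?_
    rcases k.eq_zero_or_pos with rfl | hk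
    · simp
    · gcongr
      linarith
  calc cesaroA α k ≤ ∏ i ∈ range k, exp (α / ((i : ℝ) + 1)) := by
        rw [hprod]
        exact prod_le_prod (fun i _ => by positivity) fun i _ => by
          rw [add_comm]; exact add_one_le_exp _
    _ = exp (α * harmonic k) := by
        rw [← exp_sum, harmonic]
        push_cast
        rw [mul_sum]
        simp only [div_eq_mul_inv]
    _ ≤ exp (α * (1 + log ((k : ℝ) + 1))) := by gcongr
    _ = exp α * ((k : ℝ) + 1) ^ α := by
        rw [mul_add, mul_one, exp_add, rpow_def_of_pos (by positivity), mul_comm α]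

lemma cesaroA_sub_one_succ_le {α : ℝ} (hα0 : 0 ≤ α) (hα1 : α ≤ 1) (k : ℕ) :
    cesaroA (α - 1) (k + 1) ≤ exp α * ((k : ℝ) + 1) ^ (α - 1) := by
  have hk : (0 : ℝ) < k + 1 := by positivity
  calc cesaroA (α - 1) (k + 1) = cesaroA α k * (α / (k + 1)) := cesaroA_sub_one_succ α k
    _ ≤ exp α * ((k : ℝ) + 1) ^ α * (1 / (k + 1)) := by
        gcongr
        exact cesaroA_le_exp_mul_rpow hα0 k
    _ = exp α * ((k : ℝ) + 1) ^ (α - 1) := by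
        rw [rpow_sub_one hk.ne']
        ring

namespace Finset

variable {E : Type*} [SeminormedAddCommGroup E] [NormedSpace ℝ E] {f : ℕ → ℝ} {g : ℕ → E}
  {b : ℝ}

theorem norm_sum_range_smul_le_of_antitone (hf : Antitone f) (hf0 : ∀ n, 0 ≤ f n)
    (hg : ∀ n, ‖∑ i ∈ range n, g i‖ ≤ b) (n : ℕ) :
    ‖∑ i ∈ range n, f i • g i‖ ≤ f 0 * b := by
  have hstep : ∀ i, 0 ≤ f i - f (i + 1) := fun i => sub_nonneg.mpr (hf i.le_succ)
  rw [sum_range_by_parts]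
  calc ‖f (n - 1) • ∑ i ∈ range n, g i
          - ∑ i ∈ range (n - 1), (f (i + 1) - f i) • ∑ j ∈ range (i + 1), g j‖
      ≤ f (n - 1) * b + ∑ i ∈ range (n - 1), (f i - f (i + 1)) * b := by
        refine (norm_sub_le _ _).trans (add_le_add ?_ ((norm_sum_le _ _).trans ?_))
        · rw [norm_smul, Real.norm_of_nonneg (hf0 _)]
          exact mul_le_mul_of_nonneg_left (hg n) (hf0 _)
        · refine sum_le_sum fun i _ => ?_
          rw [norm_smul, ← neg_sub, norm_neg, Real.norm_of_nonneg (hstep i)]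
          exact mul_le_mul_of_nonneg_left (hg _) (hstep i)
    _ = f 0 * b := by rw [← sum_mul, sum_range_sub']; ring

theorem norm_sum_Ico_smul_le_of_antitone (hf : Antitone f) (hf0 : ∀ n, 0 ≤ f n)
    (hg : ∀ n, ‖∑ i ∈ range n, g i‖ ≤ b) (m n : ℕ) :
    ‖∑ i ∈ Ico m n, f i • g i‖ ≤ f m * (2 * b) := by
  rw [sum_Ico_eq_sum_range]
  refine norm_sum_range_smul_le_of_antitone (f := fun i => f (m + i))
    (fun i j hij => hf (by omega)) (fun i => hf0 _) (fun k => ?_) (n - m)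
  rw [← add_sub_cancel_left (∑ i ∈ range m, g i) (∑ i ∈ range k, g (m + i)), ← sum_range_add,
    two_mul]
  exact (norm_sub_le _ _).trans (add_le_add (hg _) (hg _))

theorem norm_sum_range_smul_le (hf : Antitone f) (hf0 : ∀ n, 0 ≤ f n)
    (hg : ∀ n, ‖∑ i ∈ range n, g i‖ ≤ b) (m n : ℕ) :
    ‖∑ i ∈ range n, f i • g i‖ ≤ ∑ i ∈ range m, f i * ‖g i‖ + f m * (2 * b) := by
  have hb : 0 ≤ b := by simpa using hg 0
  have hhead : ∀ k, ‖∑ i ∈ range k, f i • g i‖ ≤ ∑ i ∈ range k, f i * ‖g i‖ := fun k =>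
    (norm_sum_le _ _).trans_eq
      (sum_congr rfl fun i _ => by rw [norm_smul, Real.norm_of_nonneg (hf0 i)])
  rcases le_total n m with hnm | hmn
  · calc ‖∑ i ∈ range n, f i • g i‖ ≤ ∑ i ∈ range n, f i * ‖g i‖ := hhead n
      _ ≤ ∑ i ∈ range m, f i * ‖g i‖ :=
        sum_le_sum_of_subset_of_nonneg (range_mono hnm) fun i _ _ => by
          have := hf0 i; positivity
      _ ≤ _ := le_add_of_nonneg_right (by have := hf0 m; positivity)
  · rw [← sum_range_add_sum_Ico _ hmn]
    exact (norm_add_le _ _).trans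
      (add_le_add (hhead m) (norm_sum_Ico_smul_le_of_antitone hf hf0 hg m n))

end Finset

theorem norm_geom_sum_le {K : Type*} [NormedDivisionRing K] {z : K} (hz : ‖z‖ ≤ 1) (hz1 : z ≠ 1)
    (n : ℕ) : ‖∑ i ∈ range n, z ^ i‖ ≤ 2 / ‖1 - z‖ := by
  rw [geom_sum_eq hz1, norm_div, norm_sub_rev z]
  gcongr
  calc ‖z ^ n - 1‖ ≤ ‖z‖ ^ n + ‖(1 : K)‖ := by rw [← norm_pow]; exact norm_sub_le _ _
    _ ≤ 2 := by rw [norm_one]; linarith [pow_le_one₀ (norm_nonneg z) hz (n := n)]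

theorem norm_sum_cesaroA_sub_one_mul_pow_le {α : ℝ} (hα0 : 0 < α) (hα1 : α ≤ 1) {z : ℂ}
    (hz : ‖z‖ ≤ 1) (hz1 : z ≠ 1) (n : ℕ) :
    ‖∑ j ∈ range n, (cesaroA (α - 1) j : ℂ) * z ^ j‖ ≤ 7 * exp α / ‖1 - z‖ ^ α := by
  set t := ‖1 - z‖
  have ht0 : 0 < t := norm_pos_iff.mpr (sub_ne_zero.mpr hz1.symm)
  have ht2 : t ≤ 2 := (norm_sub_le 1 z).trans (by rw [norm_one]; linarith)
  set m := ⌊t⁻¹⌋₊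
  have hm_gt : t⁻¹ < m + 1 := Nat.lt_floor_add_one _
  have hm_le : (m : ℝ) + 1 ≤ 3 * t⁻¹ := by
    have : (m : ℝ) ≤ t⁻¹ := Nat.floor_le (by positivity)
    have : 1 ≤ 2 * t⁻¹ := by rw [← div_eq_mul_inv, le_div_iff₀ ht0]; linarith
    linarith
  have hsplit := norm_sum_range_smul_le (cesaroA_sub_one_antitone hα0 hα1)
    (fun k => (cesaroA_pos (by linarith) k).le) (norm_geom_sum_le hz hz1) (m + 1) n
  simp only [Complex.real_smul, show ‖1 - z‖ = t from rfl] at hsplit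
  have hhead : ∑ i ∈ range (m + 1), cesaroA (α - 1) i * ‖z ^ i‖ ≤ 3 * exp α / t ^ α :=
    calc ∑ i ∈ range (m + 1), cesaroA (α - 1) i * ‖z ^ i‖
        ≤ ∑ i ∈ range (m + 1), cesaroA (α - 1) i := sum_le_sum fun i _ =>
          mul_le_of_le_one_right (cesaroA_pos (by linarith) i).le
            (by rw [norm_pow]; exact pow_le_one₀ (norm_nonneg z) hz)
      _ = cesaroA α m := sum_range_cesaroA_sub_one α m
      _ ≤ exp α * ((m : ℝ) + 1) ^ α := cesaroA_le_exp_mul_rpow hα0.le m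
      _ ≤ exp α * (3 * t⁻¹) ^ α := by gcongr
      _ = exp α * 3 ^ α / t ^ α := by
          rw [mul_rpow (by norm_num) (by positivity), inv_rpow ht0.le]; ring
      _ ≤ exp α * 3 / t ^ α := by
          gcongr
          exact rpow_le_self_of_one_le (by norm_num) hα1
      _ = 3 * exp α / t ^ α := by ring
  have htail : cesaroA (α - 1) (m + 1) * (2 * (2 / t)) ≤ 4 * exp α / t ^ α :=
    calc cesaroA (α - 1) (m + 1) * (2 * (2 / t))
        ≤ exp α * ((m : ℝ) + 1) ^ (α - 1) * (2 * (2 / t)) := by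
          gcongr
          exact cesaroA_sub_one_succ_le hα0.le hα1 m
      _ ≤ exp α * t⁻¹ ^ (α - 1) * (2 * (2 / t)) := by
          have := rpow_le_rpow_of_nonpos (inv_pos.mpr ht0) hm_gt.le (sub_nonpos.mpr hα1)
          gcongr
      _ = 4 * exp α / t ^ α := by
          rw [rpow_sub_one (inv_ne_zero ht0.ne'), inv_rpow ht0.le]
          field_simp
          norm_num
  calc _ ≤ _ := hsplit
    _ ≤ 3 * exp α / t ^ α + 4 * exp α / t ^ α := add_le_add hhead htail
    _ = 7 * exp α / t ^ α := by ring

theorem norm_sum_range_reflect_mul_pow {K : Type*} [NormedField K] (c : ℕ → K) {w : K}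
    (hw : ‖w‖ = 1) (n : ℕ) :
    ‖∑ k ∈ range n, c (n - 1 - k) * w ^ k‖ = ‖∑ k ∈ range n, c k * w⁻¹ ^ k‖ := by
  have hw0 : w ≠ 0 := norm_ne_zero_iff.mp (by rw [hw]; exact one_ne_zero)
  have hterm : ∀ k ∈ range n, c (n - 1 - (n - 1 - k)) * w ^ (n - 1 - k) =
      w ^ (n - 1) * (c k * w⁻¹ ^ k) := fun k hk => by
    have hkn := mem_range.mp hk
    rw [Nat.sub_sub_self (by omega), pow_sub₀ w hw0 (by omega), inv_pow]
    ring
  rw [← sum_range_reflect (fun k => c (n - 1 - k) * w ^ k) n, sum_congr rfl hterm, ← mul_sum,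
    norm_mul, norm_pow, hw, one_pow, one_mul]

theorem norm_sum_mul_exp_I_mul_half_add (c : ℕ → ℂ) (u : ℝ) (n : ℕ) :
    ‖∑ k ∈ range n, c (n - 1 - k) * Complex.exp (Complex.I * ((k : ℂ) + 1 / 2) * u)‖ =
      ‖∑ k ∈ range n, c k * (Complex.exp (Complex.I * u))⁻¹ ^ k‖ := by
  have hexp : ∀ k : ℕ, Complex.exp (Complex.I * ((k : ℂ) + 1 / 2) * u) =
      Complex.exp (Complex.I * ↑(u / 2)) * Complex.exp (Complex.I * u) ^ k := fun k => by
    rw [← Complex.exp_nat_mul, ← Complex.exp_add]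
    push_cast
    ring_nf
  simp only [hexp, mul_left_comm _ (Complex.exp (Complex.I * ↑(u / 2))), ← mul_sum, norm_mul,
    Complex.norm_exp_I_mul_ofReal, one_mul]
  exact norm_sum_range_reflect_mul_pow c (Complex.norm_exp_I_mul_ofReal u) n

theorem norm_one_sub_inv_exp_I_mul (u : ℝ) :
    ‖1 - (Complex.exp (Complex.I * u))⁻¹‖ = 2 * |sin (u / 2)| := by
  have hw := Complex.norm_exp_I_mul_ofReal u
  rw [show 1 - (Complex.exp (Complex.I * u))⁻¹ =
      (Complex.exp (Complex.I * u))⁻¹ * (Complex.exp (Complex.I * u) - 1) by field_simp,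
    norm_mul, norm_inv, hw, inv_one, one_mul, Complex.norm_exp_I_mul_ofReal_sub_one, norm_mul,
    Real.norm_two, Real.norm_eq_abs]

/-- For `0 < α ≤ 1`: there is a constant `C` (depending only on `α`) such that for all
`n ≥ 1` and real `u` with `sin (u/2) ≠ 0`,
`|∑_{k=0}^{n-1} A_{n-1-k}^{α-1} e^{i(k+1/2)u}| ≤ C / |sin(u/2)|^α + C n^{α-1} / |sin(u/2)|`. -/
theorem cesaro_kernel_bound (α : ℝ) (hα0 : 0 < α) (hα1 : α ≤ 1) :
    ∃ C > (0 : ℝ), ∀ n : ℕ, 1 ≤ n → ∀ u : ℝ, Real.sin (u / 2) ≠ 0 →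
      ‖∑ k ∈ Finset.range n, (cesaroA (α - 1) (n - 1 - k) : ℂ) *
          Complex.exp (Complex.I * ((k : ℂ) + 1 / 2) * (u : ℂ))‖ ≤
        C / |Real.sin (u / 2)| ^ α + C * (n : ℝ) ^ (α - 1) / |Real.sin (u / 2)| := by
  refine ⟨7 * exp α, by positivity, fun n _ u hu => ?_⟩
  have hs : 0 < |sin (u / 2)| := abs_pos.mpr hu
  have hz1 : (Complex.exp (Complex.I * u))⁻¹ ≠ 1 := fun h => by
    have := norm_one_sub_inv_exp_I_mul u
    rw [h, sub_self, norm_zero] at this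
    linarith
  rw [norm_sum_mul_exp_I_mul_half_add (fun k => (cesaroA (α - 1) k : ℂ))]
  calc _ ≤ 7 * exp α / ‖1 - (Complex.exp (Complex.I * u))⁻¹‖ ^ α :=
        norm_sum_cesaroA_sub_one_mul_pow_le hα0 hα1
          (by rw [norm_inv, Complex.norm_exp_I_mul_ofReal, inv_one]) hz1 n
    _ ≤ 7 * exp α / |sin (u / 2)| ^ α := by
        rw [norm_one_sub_inv_exp_I_mul]
        gcongr
        linarith
    _ ≤ _ := le_add_of_nonneg_right (by positivity)
end
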